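/- arXiv:2001.00158 — 3 statements merged into one kernel-verified Lean document; each statement's English description precedes it below -/
import Mathlib

section
/- Let q = 2^m with m even, and let U be the group of (q+1)-st roots of unity in GF(q^2). For any three pairwise distinct elements u1, u2, u3 of U, the sum u1 + u2 + u3 is nonzero. -/
/-!
Write `q = 2 ^ m`. Dividing by `u₃` and using characteristic `2`, a relation `u₁ + u₂ + u₃ = 0`
gives an `a = u₁ / u₃ ≠ 1` with `a ^ (q + 1) = (a + 1) ^ (q + 1) = 1`. Since Frobenius is additive,
`a ^ q = a⁻¹` and `a⁻¹ + 1 = (a + 1)⁻¹`, which forces `a ^ 2 + a + 1 = 0`, so `a ^ 3 = 1`.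
For `m` even, `q + 1 ≡ 2 [MOD 3]`, so `3` and `q + 1` are coprime and `a = 1`.
-/

theorem charP_two_of_card_eq_two_pow {F : Type*} [Field F] [Fintype F] {k : ℕ} (hk : k ≠ 0)
    (hF : Fintype.card F = 2 ^ k) : CharP F 2 :=
  ringChar.of_eq <| FiniteField.even_card_iff_char_two.mpr <| by
    rw [hF, Nat.pow_mod, Nat.mod_self, zero_pow hk, Nat.zero_mod]

theorem pow_three_eq_one_of_pow_two_pow_add_one_eq_one {F : Type*} [Field F] [CharP F 2] (m : ℕ)
    {a : F} (ha : a ^ (2 ^ m + 1) = 1) (ha' : (a + 1) ^ (2 ^ m + 1) = 1) : a ^ 3 = 1 := by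
  have hfrob : (a + 1) ^ 2 ^ m = a ^ 2 ^ m + 1 := by rw [add_pow_char_pow, one_pow]
  have hinv : a ^ 2 ^ m * a = 1 := by rwa [← pow_succ]
  have hinv' : (a ^ 2 ^ m + 1) * (a + 1) = 1 := by rwa [← hfrob, ← pow_succ]
  have htwo : (2 : F) = 0 := CharP.cast_eq_zero F 2
  have hconj : a ^ 2 ^ m = a + 1 := by linear_combination hinv' - hinv - htwo - htwo * a
  have hquad : (a + 1) * a = 1 := hconj ▸ hinv
  linear_combination (a - 1) * hquad + (a - 1) * htwo

theorem Nat.coprime_three_two_pow_add_one {m : ℕ} (hm : Even m) : Nat.Coprime 3 (2 ^ m + 1) := by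
  obtain ⟨k, rfl⟩ := hm
  have h4 : 2 ^ (k + k) % 3 = 1 := by
    rw [← two_mul, pow_mul, Nat.pow_mod]
    simp
  exact (Nat.Prime.coprime_iff_not_dvd Nat.prime_three).mpr (by omega)

theorem stmt_2_general (m : ℕ) (hm : 0 < m) (hme : Even m) (F : Type*) [Field F] [Fintype F]
    (hF : Fintype.card F = 2 ^ (2 * m))
    (u1 u2 u3 : F)
    (h1 : u1 ^ (2 ^ m + 1) = 1) (h2 : u2 ^ (2 ^ m + 1) = 1)
    (h3 : u3 ^ (2 ^ m + 1) = 1)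
    (h13 : u1 ≠ u3) :
    u1 + u2 + u3 ≠ 0 := by
  intro hsum
  have := charP_two_of_card_eq_two_pow (by omega) hF
  have hu3 : u3 ≠ 0 := by
    rintro rfl
    simp at h3
  have hu2 : u1 / u3 + 1 = u2 / u3 := by
    rw [div_add_one hu3]
    congr 1
    linear_combination hsum - u2 * CharP.cast_eq_zero F 2
  have ha : (u1 / u3) ^ (2 ^ m + 1) = 1 := by rw [div_pow, h1, h3, div_one]
  have ha' : (u1 / u3 + 1) ^ (2 ^ m + 1) = 1 := by rw [hu2, div_pow, h2, h3, div_one]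
  have ha3 := pow_three_eq_one_of_pow_two_pow_add_one_eq_one m ha ha'
  exact h13 <| (div_eq_one_iff_eq hu3).mp <|
    (pow_eq_one_iff_of_coprime (Nat.coprime_three_two_pow_add_one hme)).mp ⟨ha3, ha⟩

/-- For `q = 2^m` with `m` even, the sum of three pairwise distinct `(q+1)`-st
roots of unity in `GF(q^2)` is nonzero. -/
theorem stmt_2 (m : ℕ) (hm : 0 < m) (hme : Even m) (F : Type*) [Field F] [Fintype F]
    (hF : Fintype.card F = 2 ^ (2 * m))
    (u1 u2 u3 : F)
    (h1 : u1 ^ (2 ^ m + 1) = 1) (h2 : u2 ^ (2 ^ m + 1) = 1)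
    (h3 : u3 ^ (2 ^ m + 1) = 1)
    (h12 : u1 ≠ u2) (h13 : u1 ≠ u3) (h23 : u2 ≠ u3) :
    u1 + u2 + u3 ≠ 0 :=
  stmt_2_general m hm hme F hF u1 u2 u3 h1 h2 h3 h13
end

section
/- Let q = 2^m with m odd. Let u1, u2, u3 be pairwise distinct elements of the group U of (q+1)-st roots of unity in GF(q^2), with a = (s1*s2+s3)/(s1^2+s2), b = (s2^2+s1*s3)/(s1^2+s2), assuming (s1^2+s2)(s1*s2+s3)(s2^2+s1*s3) ≠ 0. Then the polynomial f(u) = u^2 + a·u + b has no root in U other than possibly the square root of b. -/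
/-!
Work in characteristic 2 with `ω² + ω + 1 = 0` (such `ω` lies in `GF(q²)`) and let `σ x = x ^ q`,
so that `σ u = u⁻¹` on `U` and, since `q ≡ 2 (mod 3)` for odd `m`, `σ ω = ω²`.
A root `u` of `f` satisfies `D u² + A u + B = 0` with `D = s1² + s2`, `A = s1 s2 + s3`,
`B = s2² + s1 s3`. For the Lagrange resolvents `X = u1 + ω u2 + ω² u3` and
`M = u2 u3 + ω u1 u2 + ω² u3 u1` the product `XM` is a root of `T² + A T + BD`, so
`w = uD + XM` satisfies `w (w + A) = 0`. On the other hand `σ X = M / s3`, `σ M = X / s3` and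
`σ D = B / s3²`, whence `σ w · u s3² = (w + A) u` for `u ∈ U`. Both `w = 0` and `w = A` now force
`A = 0`: in fact `f` has no root in `U` at all.
-/

section Resolvent

variable {R : Type*} [CommRing R] {ω : R}

def lagrangeResolvent (ω x y z : R) : R := x + ω * y + ω ^ 2 * z

theorem lagrangeResolvent_mul_sq_add [CharP R 2] (hω : ω ^ 2 + ω + 1 = 0) (u1 u2 u3 : R)
    {s1 s2 s3 : R} (hs1 : s1 = u1 + u2 + u3) (hs2 : s2 = u1 * u2 + u2 * u3 + u3 * u1)
    (hs3 : s3 = u1 * u2 * u3) :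
    (lagrangeResolvent ω u1 u2 u3 * lagrangeResolvent ω (u2 * u3) (u1 * u2) (u3 * u1)) ^ 2 +
        (s1 * s2 + s3) *
          (lagrangeResolvent ω u1 u2 u3 * lagrangeResolvent ω (u2 * u3) (u1 * u2) (u3 * u1)) =
      (s2 ^ 2 + s1 * s3) * (s1 ^ 2 + s2) := by
  subst hs1 hs2 hs3
  unfold lagrangeResolvent
  grind

end Resolvent

section Conjugation

variable {F : Type*} [Field F] (σ : F →+* F) {ω u1 u2 u3 : F}

theorem map_lagrangeResolvent_mul (hω : ω ^ 3 = 1) (hσω : σ ω = ω ^ 2)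
    (h1 : σ u1 * u1 = 1) (h2 : σ u2 * u2 = 1) (h3 : σ u3 * u3 = 1) :
    σ (lagrangeResolvent ω u1 u2 u3) * (u1 * u2 * u3) =
      lagrangeResolvent ω (u2 * u3) (u1 * u2) (u3 * u1) := by
  have := right_ne_zero_of_mul_eq_one h1
  have := right_ne_zero_of_mul_eq_one h2
  have := right_ne_zero_of_mul_eq_one h3
  simp only [lagrangeResolvent, map_add, map_mul, map_pow, hσω, eq_inv_of_mul_eq_one_left h1,
    eq_inv_of_mul_eq_one_left h2, eq_inv_of_mul_eq_one_left h3]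
  field_simp
  linear_combination ω * (u1 * u2) * hω

theorem map_lagrangeResolvent_mul_prods (hω : ω ^ 3 = 1) (hσω : σ ω = ω ^ 2)
    (h1 : σ u1 * u1 = 1) (h2 : σ u2 * u2 = 1) (h3 : σ u3 * u3 = 1) :
    σ (lagrangeResolvent ω (u2 * u3) (u1 * u2) (u3 * u1)) * (u1 * u2 * u3) =
      lagrangeResolvent ω u1 u2 u3 := by
  have := right_ne_zero_of_mul_eq_one h1
  have := right_ne_zero_of_mul_eq_one h2
  have := right_ne_zero_of_mul_eq_one h3
  simp only [lagrangeResolvent, map_add, map_mul, map_pow, hσω, eq_inv_of_mul_eq_one_left h1,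
    eq_inv_of_mul_eq_one_left h2, eq_inv_of_mul_eq_one_left h3]
  field_simp
  linear_combination ω * u2 * hω

theorem map_sq_add_mul {s1 s2 s3 : F}
    (h1 : σ u1 * u1 = 1) (h2 : σ u2 * u2 = 1) (h3 : σ u3 * u3 = 1)
    (hs1 : s1 = u1 + u2 + u3) (hs2 : s2 = u1 * u2 + u2 * u3 + u3 * u1)
    (hs3 : s3 = u1 * u2 * u3) :
    σ (s1 ^ 2 + s2) * s3 ^ 2 = s2 ^ 2 + s1 * s3 := by
  have := right_ne_zero_of_mul_eq_one h1
  have := right_ne_zero_of_mul_eq_one h2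
  have := right_ne_zero_of_mul_eq_one h3
  subst hs1 hs2 hs3
  simp only [map_add, map_mul, map_pow, eq_inv_of_mul_eq_one_left h1,
    eq_inv_of_mul_eq_one_left h2, eq_inv_of_mul_eq_one_left h3]
  field_simp
  ring

theorem quadratic_ne_zero_of_map_mul_self_eq_one [CharP F 2] (hω : ω ^ 2 + ω + 1 = 0)
    (hσω : σ ω = ω ^ 2) (h1 : σ u1 * u1 = 1) (h2 : σ u2 * u2 = 1) (h3 : σ u3 * u3 = 1)
    {u : F} (hu : σ u * u = 1) {s1 s2 s3 : F} (hs1 : s1 = u1 + u2 + u3)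
    (hs2 : s2 = u1 * u2 + u2 * u3 + u3 * u1) (hs3 : s3 = u1 * u2 * u3)
    (hA : s1 * s2 + s3 ≠ 0) :
    (s1 ^ 2 + s2) * u ^ 2 + (s1 * s2 + s3) * u + (s2 ^ 2 + s1 * s3) ≠ 0 := by
  intro hroot
  have hω3 : ω ^ 3 = 1 := by linear_combination (ω - 1) * hω
  have hu0 : u ≠ 0 := right_ne_zero_of_mul_eq_one hu
  have hs3_ne : s3 ≠ 0 := hs3 ▸ mul_ne_zero (mul_ne_zero (right_ne_zero_of_mul_eq_one h1)
    (right_ne_zero_of_mul_eq_one h2)) (right_ne_zero_of_mul_eq_one h3)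
  set X := lagrangeResolvent ω u1 u2 u3
  set M := lagrangeResolvent ω (u2 * u3) (u1 * u2) (u3 * u1)
  set w := u * (s1 ^ 2 + s2) + X * M
  have hw : w * (w + (s1 * s2 + s3)) = 0 := by
    linear_combination (s1 ^ 2 + s2) * hroot + lagrangeResolvent_mul_sq_add hω u1 u2 u3 hs1 hs2 hs3 +
      u * (s1 ^ 2 + s2) * X * M * (CharTwo.two_eq_zero (R := F))
  have hσw : σ w * (u * s3 ^ 2) = (w + (s1 * s2 + s3)) * u := by
    have hX := map_lagrangeResolvent_mul σ hω3 hσω h1 h2 h3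
    have hM := map_lagrangeResolvent_mul_prods σ hω3 hσω h1 h2 h3
    have hD := map_sq_add_mul σ h1 h2 h3 hs1 hs2 hs3
    rw [← hs3] at hX hM
    rw [map_add, map_mul, map_mul]
    linear_combination σ (s1 ^ 2 + s2) * s3 ^ 2 * hu + hD + u * σ X * s3 * hM + u * X * hX - hroot +
      (s2 ^ 2 + s1 * s3) * (CharTwo.two_eq_zero (R := F))
  rcases mul_eq_zero.mp hw with h | h
  · rw [h, map_zero, zero_mul, zero_add] at hσw
    exact mul_ne_zero hA hu0 hσw.symm
  · rw [h, zero_mul] at hσw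
    have hw0 : w = 0 := by simpa [hu0, hs3_ne] using hσw
    exact hA (by rwa [hw0, zero_add] at h)

end Conjugation

theorem three_dvd_four_pow_sub_one (m : ℕ) : 3 ∣ 4 ^ m - 1 := by
  simpa using Nat.sub_dvd_pow_sub_pow 4 1 m

theorem two_pow_mod_three_of_odd {m : ℕ} (hm : Odd m) : 2 ^ m % 3 = 2 := by
  obtain ⟨k, rfl⟩ := hm
  rw [pow_succ, pow_mul, Nat.mul_mod, Nat.pow_mod]
  norm_num

theorem pow_two_pow_eq_sq_of_odd {M : Type*} [Monoid M] {ω : M} (hω : ω ^ 3 = 1) {m : ℕ}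
    (hm : Odd m) : ω ^ 2 ^ m = ω ^ 2 := by
  rw [pow_eq_pow_mod _ hω, two_pow_mod_three_of_odd hm]

section FiniteField

variable {F : Type*} [Field F] [Fintype F]

theorem charP_two_of_card_eq_two_pow_s11 {n : ℕ} (hn : n ≠ 0) (hF : Fintype.card F = 2 ^ n) :
    CharP F 2 := by
  have h : (2 : F) ^ n = 0 := by exact_mod_cast hF ▸ FiniteField.cast_card_eq_zero F
  exact CharTwo.of_one_ne_zero_of_two_eq_zero one_ne_zero (pow_eq_zero_iff hn |>.mp h)

theorem exists_sq_add_self_add_one_eq_zero (h : 3 ∣ Fintype.card F - 1) :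
    ∃ ω : F, ω ^ 2 + ω + 1 = 0 := by
  classical
  obtain ⟨x, hx⟩ := exists_prime_orderOf_dvd_card (G := Fˣ) 3 (by rwa [Fintype.card_units])
  have hprim : IsPrimitiveRoot (x : F) 3 :=
    IsPrimitiveRoot.coe_units_iff.mpr (hx ▸ IsPrimitiveRoot.orderOf x)
  have hsum := hprim.geom_sum_eq_zero (by norm_num)
  simp only [Finset.sum_range_succ, Finset.sum_range_zero] at hsum
  exact ⟨x, by linear_combination hsum⟩

end FiniteField

theorem stmt_11_general (m : ℕ) (hmo : Odd m) (F : Type*) [Field F] [Fintype F]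
    (hF : Fintype.card F = 2 ^ (2 * m))
    (u1 u2 u3 : F)
    (h1 : u1 ^ (2 ^ m + 1) = 1) (h2 : u2 ^ (2 ^ m + 1) = 1)
    (h3 : u3 ^ (2 ^ m + 1) = 1)
    (s1 s2 s3 a b : F)
    (hs1 : s1 = u1 + u2 + u3) (hs2 : s2 = u1 * u2 + u2 * u3 + u3 * u1)
    (hs3 : s3 = u1 * u2 * u3)
    (hnz : (s1 ^ 2 + s2) * (s1 * s2 + s3) * (s2 ^ 2 + s1 * s3) ≠ 0)
    (ha : a = (s1 * s2 + s3) / (s1 ^ 2 + s2))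
    (hb : b = (s2 ^ 2 + s1 * s3) / (s1 ^ 2 + s2)) :
    ∀ u : F, u ^ (2 ^ m + 1) = 1 → u ^ 2 + a * u + b = 0 → u ^ 2 = b := by
  intro u hu hroot
  have : CharP F 2 := charP_two_of_card_eq_two_pow_s11 (by have := hmo.pos; omega) hF
  obtain ⟨ω, hω⟩ := exists_sq_add_self_add_one_eq_zero (F := F)
    (by rw [hF, pow_mul]; exact three_dvd_four_pow_sub_one m)
  let σ := iterateFrobenius F 2 m
  have hσ (x : F) (hx : x ^ (2 ^ m + 1) = 1) : σ x * x = 1 := by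
    rwa [iterateFrobenius_def, ← pow_succ]
  have hσω : σ ω = ω ^ 2 := pow_two_pow_eq_sq_of_odd (by linear_combination (ω - 1) * hω) hmo
  have hD : s1 ^ 2 + s2 ≠ 0 := left_ne_zero_of_mul (left_ne_zero_of_mul hnz)
  have hA : s1 * s2 + s3 ≠ 0 := right_ne_zero_of_mul (left_ne_zero_of_mul hnz)
  refine absurd ?_ (quadratic_ne_zero_of_map_mul_self_eq_one σ hω hσω (hσ _ h1) (hσ _ h2)
    (hσ _ h3) (hσ _ hu) hs1 hs2 hs3 hA)
  rw [ha, hb] at hroot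
  field_simp at hroot
  linear_combination hroot

/-- For `q = 2^m` with `m` odd, pairwise distinct `(q+1)`-st roots of unity
`u1, u2, u3` in `GF(q^2)` with `(s1^2+s2)(s1*s2+s3)(s2^2+s1*s3) ≠ 0`, and
`a = (s1*s2+s3)/(s1^2+s2)`, `b = (s2^2+s1*s3)/(s1^2+s2)`, the polynomial
`u^2 + a·u + b` has no root in `U_{q+1}` other than possibly the square root of `b`. -/
theorem stmt_11 (m : ℕ) (hm : 0 < m) (hmo : Odd m) (F : Type*) [Field F] [Fintype F]
    (hF : Fintype.card F = 2 ^ (2 * m))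
    (u1 u2 u3 : F)
    (h1 : u1 ^ (2 ^ m + 1) = 1) (h2 : u2 ^ (2 ^ m + 1) = 1)
    (h3 : u3 ^ (2 ^ m + 1) = 1)
    (h12 : u1 ≠ u2) (h13 : u1 ≠ u3) (h23 : u2 ≠ u3)
    (s1 s2 s3 a b : F)
    (hs1 : s1 = u1 + u2 + u3) (hs2 : s2 = u1 * u2 + u2 * u3 + u3 * u1)
    (hs3 : s3 = u1 * u2 * u3)
    (hnz : (s1 ^ 2 + s2) * (s1 * s2 + s3) * (s2 ^ 2 + s1 * s3) ≠ 0)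
    (ha : a = (s1 * s2 + s3) / (s1 ^ 2 + s2))
    (hb : b = (s2 ^ 2 + s1 * s3) / (s1 ^ 2 + s2)) :
    ∀ u : F, u ^ (2 ^ m + 1) = 1 → u ^ 2 + a * u + b = 0 → u ^ 2 = b :=
  stmt_11_general m hmo F hF u1 u2 u3 h1 h2 h3 s1 s2 s3 a b hs1 hs2 hs3 hnz ha hb
end

section
/- Let q = 2^m and let u1, u2, u3, u4 be four pairwise distinct elements of the group U of (q+1)-st roots of unity in GF(q^2). Set w = sqrt(σ_{4,3}/σ_{4,1}) and, for i ∈ {1,2,3,4}, v_i = (σ_{4,3} + u_i·σ_{4,2})/(σ_{4,2} + u_i·σ_{4,1}). Then σ_{6,3}(u1, u2, u3, u4, w, w) = 0 and σ_{6,3}(u1, u2, u3, u4, v_i, u_i) = 0. -/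
/-!
Write `s₁, s₂, s₃, s₄` for the elementary symmetric functions of `u₁, …, u₄`. Adjoining two
elements `a, b` gives `σ₆,₃ = (s₃ + b s₂) + a (s₂ + b s₁)`, so in characteristic two both claims
have the shape `N + (N / D) D = 0`, which holds as soon as `N` vanishes whenever `D` does.
That is where the unit circle enters: `x ↦ x^q` inverts every `uᵢ`, so `s₁^q s₄ = s₃` and
`s₂^q s₄ = s₂`. Hence `s₁ = 0` forces `s₃ = 0`, and `s₂ = u s₁` with `u^(q+1) = 1` forces
`u s₂ = u^(q+1) s₁^q s₄ = s₃`.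
-/

open Multiset

lemma Multiset.esymm_three_quadruple_add_pair {R : Type*} [CommSemiring R] (u1 u2 u3 u4 a b : R) :
    esymm ({u1, u2, u3, u4, a, b} : Multiset R) 3 =
      u1 * u2 * u3 + u1 * u2 * u4 + u1 * u3 * u4 + u2 * u3 * u4
        + (a + b) * (u1 * u2 + u1 * u3 + u1 * u4 + u2 * u3 + u2 * u4 + u3 * u4)
        + a * b * (u1 + u2 + u3 + u4) := by
  simp only [esymm, insert_eq_cons, powersetCard_cons, Nat.reduceAdd, card_cons, card_singleton,
    Nat.lt_add_one, powersetCard_eq_empty, Order.lt_two_iff, Std.le_refl, powersetCard_one,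
    map_singleton, zero_add, powersetCard_zero_left, cons_zero, singleton_add,
    map_cons, add_cons, cons_add, prod_cons, prod_singleton, sum_cons, sum_singleton]
  ring

lemma CharTwo.add_div_mul_self_eq_zero {F : Type*} [DivisionRing F] [CharP F 2] {x y : F}
    (h : y = 0 → x = 0) : x + x / y * y = 0 := by
  by_cases hy : y = 0
  · simp [hy, h hy]
  · rw [div_mul_cancel₀ x hy, CharTwo.add_self_eq_zero]

lemma pow_eq_inv_of_pow_succ_eq_one {G : Type*} [DivisionMonoid G] {u : G} {q : ℕ}
    (hu : u ^ (q + 1) = 1) : u ^ q = u⁻¹ :=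
  eq_inv_of_mul_eq_one_left ((pow_succ u q).symm.trans hu)

lemma ne_zero_of_pow_succ_eq_one {M₀ : Type*} [MonoidWithZero M₀] [Nontrivial M₀] {u : M₀} {q : ℕ}
    (hu : u ^ (q + 1) = 1) : u ≠ 0 :=
  ne_zero_pow q.succ_ne_zero (hu ▸ one_ne_zero)

section UnitCircle

variable {F : Type*} [Field F] {p n : ℕ} [ExpChar F p] {u1 u2 u3 u4 : F}

lemma esymm_one_pow_mul_prod (h1 : u1 ^ (p ^ n + 1) = 1) (h2 : u2 ^ (p ^ n + 1) = 1)
    (h3 : u3 ^ (p ^ n + 1) = 1) (h4 : u4 ^ (p ^ n + 1) = 1) :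
    (u1 + u2 + u3 + u4) ^ p ^ n * (u1 * u2 * u3 * u4)
      = u1 * u2 * u3 + u1 * u2 * u4 + u1 * u3 * u4 + u2 * u3 * u4 := by
  simp only [add_pow_expChar_pow, pow_eq_inv_of_pow_succ_eq_one h1,
    pow_eq_inv_of_pow_succ_eq_one h2, pow_eq_inv_of_pow_succ_eq_one h3,
    pow_eq_inv_of_pow_succ_eq_one h4]
  field_simp [ne_zero_of_pow_succ_eq_one h1, ne_zero_of_pow_succ_eq_one h2,
    ne_zero_of_pow_succ_eq_one h3, ne_zero_of_pow_succ_eq_one h4]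
  ring

lemma esymm_two_pow_mul_prod (h1 : u1 ^ (p ^ n + 1) = 1) (h2 : u2 ^ (p ^ n + 1) = 1)
    (h3 : u3 ^ (p ^ n + 1) = 1) (h4 : u4 ^ (p ^ n + 1) = 1) :
    (u1 * u2 + u1 * u3 + u1 * u4 + u2 * u3 + u2 * u4 + u3 * u4) ^ p ^ n * (u1 * u2 * u3 * u4)
      = u1 * u2 + u1 * u3 + u1 * u4 + u2 * u3 + u2 * u4 + u3 * u4 := by
  simp only [add_pow_expChar_pow, mul_pow, pow_eq_inv_of_pow_succ_eq_one h1,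
    pow_eq_inv_of_pow_succ_eq_one h2, pow_eq_inv_of_pow_succ_eq_one h3,
    pow_eq_inv_of_pow_succ_eq_one h4]
  field_simp [ne_zero_of_pow_succ_eq_one h1, ne_zero_of_pow_succ_eq_one h2,
    ne_zero_of_pow_succ_eq_one h3, ne_zero_of_pow_succ_eq_one h4]
  ring

lemma esymm_three_eq_zero_of_esymm_one_eq_zero (h1 : u1 ^ (p ^ n + 1) = 1)
    (h2 : u2 ^ (p ^ n + 1) = 1) (h3 : u3 ^ (p ^ n + 1) = 1) (h4 : u4 ^ (p ^ n + 1) = 1)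
    (hs1 : u1 + u2 + u3 + u4 = 0) :
    u1 * u2 * u3 + u1 * u2 * u4 + u1 * u3 * u4 + u2 * u3 * u4 = 0 := by
  rw [← esymm_one_pow_mul_prod h1 h2 h3 h4, hs1,
    zero_pow (pow_ne_zero n (expChar_pos F p).ne'), zero_mul]

lemma esymm_three_add_mul_esymm_two_eq_zero [CharP F 2] {u : F} (h1 : u1 ^ (2 ^ n + 1) = 1)
    (h2 : u2 ^ (2 ^ n + 1) = 1) (h3 : u3 ^ (2 ^ n + 1) = 1) (h4 : u4 ^ (2 ^ n + 1) = 1)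
    (hu : u ^ (2 ^ n + 1) = 1)
    (hd : u1 * u2 + u1 * u3 + u1 * u4 + u2 * u3 + u2 * u4 + u3 * u4 + u * (u1 + u2 + u3 + u4) = 0) :
    u1 * u2 * u3 + u1 * u2 * u4 + u1 * u3 * u4 + u2 * u3 * u4
      + u * (u1 * u2 + u1 * u3 + u1 * u4 + u2 * u3 + u2 * u4 + u3 * u4) = 0 := by
  have hs2 := CharTwo.add_eq_zero.mp hd
  have hs2_pow := congrArg (· ^ 2 ^ n) hs2
  simp only [mul_pow] at hs2_pow
  linear_combination (-1 : F) * esymm_one_pow_mul_prod h1 h2 h3 h4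
    - u * esymm_two_pow_mul_prod h1 h2 h3 h4 + u * (u1 * u2 * u3 * u4) * hs2_pow
    + (u1 + u2 + u3 + u4) ^ 2 ^ n * (u1 * u2 * u3 * u4) * hu
    + (u1 + u2 + u3 + u4) ^ 2 ^ n * (u1 * u2 * u3 * u4) * (CharTwo.two_eq_zero : (2 : F) = 0)

end UnitCircle

theorem stmt_16_general (m : ℕ) (F : Type*) [Field F] [Fintype F]
    (hF : Fintype.card F = 2 ^ (2 * m))
    (u1 u2 u3 u4 : F)
    (h1 : u1 ^ (2 ^ m + 1) = 1) (h2 : u2 ^ (2 ^ m + 1) = 1)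
    (h3 : u3 ^ (2 ^ m + 1) = 1) (h4 : u4 ^ (2 ^ m + 1) = 1)
    (s1 s2 s3 : F)
    (hs1 : s1 = u1 + u2 + u3 + u4)
    (hs2 : s2 = u1 * u2 + u1 * u3 + u1 * u4 + u2 * u3 + u2 * u4 + u3 * u4)
    (hs3 : s3 = u1 * u2 * u3 + u1 * u2 * u4 + u1 * u3 * u4 + u2 * u3 * u4)
    (w : F) (hw : w ^ 2 = s3 / s1) :
    Multiset.esymm ({u1, u2, u3, u4, w, w} : Multiset F) 3 = 0 ∧
    ∀ u ∈ ({u1, u2, u3, u4} : Set F),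
      Multiset.esymm ({u1, u2, u3, u4, (s3 + u * s2) / (s2 + u * s1), u} : Multiset F) 3
        = 0 := by
  have : CharP F 2 := charP_of_card_eq_prime_pow hF
  refine ⟨?_, fun u hu => ?_⟩
  · rw [esymm_three_quadruple_add_pair, ← hs1, ← hs2, ← hs3, CharTwo.add_self_eq_zero,
      zero_mul, add_zero, ← sq, hw]
    refine CharTwo.add_div_mul_self_eq_zero fun h => ?_
    subst hs1 hs3
    exact esymm_three_eq_zero_of_esymm_one_eq_zero h1 h2 h3 h4 h
  · have hu : u ^ (2 ^ m + 1) = 1 := by rcases hu with rfl | rfl | rfl | rfl <;> assumption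
    set v := (s3 + u * s2) / (s2 + u * s1)
    rw [esymm_three_quadruple_add_pair, ← hs1, ← hs2, ← hs3,
      show s3 + (v + u) * s2 + v * u * s1 = s3 + u * s2 + v * (s2 + u * s1) by ring]
    refine CharTwo.add_div_mul_self_eq_zero fun h => ?_
    subst hs1 hs2 hs3
    exact esymm_three_add_mul_esymm_two_eq_zero h1 h2 h3 h4 hu h

/-- For four pairwise distinct `(q+1)`-st roots of unity `u1, u2, u3, u4` in `GF(q^2)`,
`q = 2^m`, with `w = sqrt(σ_{4,3}/σ_{4,1})` and
`v_i = (σ_{4,3} + u_i·σ_{4,2})/(σ_{4,2} + u_i·σ_{4,1})`: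
`σ_{6,3}(u1,u2,u3,u4,w,w) = 0` and `σ_{6,3}(u1,u2,u3,u4,v_i,u_i) = 0`. -/
theorem stmt_16 (m : ℕ) (hm : 0 < m) (F : Type*) [Field F] [Fintype F]
    (hF : Fintype.card F = 2 ^ (2 * m))
    (u1 u2 u3 u4 : F)
    (h1 : u1 ^ (2 ^ m + 1) = 1) (h2 : u2 ^ (2 ^ m + 1) = 1)
    (h3 : u3 ^ (2 ^ m + 1) = 1) (h4 : u4 ^ (2 ^ m + 1) = 1)
    (h12 : u1 ≠ u2) (h13 : u1 ≠ u3) (h14 : u1 ≠ u4)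
    (h23 : u2 ≠ u3) (h24 : u2 ≠ u4) (h34 : u3 ≠ u4)
    (s1 s2 s3 : F)
    (hs1 : s1 = u1 + u2 + u3 + u4)
    (hs2 : s2 = u1 * u2 + u1 * u3 + u1 * u4 + u2 * u3 + u2 * u4 + u3 * u4)
    (hs3 : s3 = u1 * u2 * u3 + u1 * u2 * u4 + u1 * u3 * u4 + u2 * u3 * u4)
    (w : F) (hw : w ^ 2 = s3 / s1) :
    Multiset.esymm ({u1, u2, u3, u4, w, w} : Multiset F) 3 = 0 ∧
    ∀ u ∈ ({u1, u2, u3, u4} : Set F),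
      Multiset.esymm ({u1, u2, u3, u4, (s3 + u * s2) / (s2 + u * s1), u} : Multiset F) 3
        = 0 :=
  stmt_16_general m F hF u1 u2 u3 u4 h1 h2 h3 h4 s1 s2 s3 hs1 hs2 hs3 w hw
end
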